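/- Inequality from the proof of the deterministic-BC region (Appendix C). Let (W,V,Y₁,Y₂) be random variables taking values in finite sets. Then I(V;Y₂|W) − I(V;Y₁|W) ≤ H(Y₂|Y₁). -/

import Mathlib

open scoped Classical BigOperators

noncomputable section

/-- Entropy (base 2) of a finitely supported distribution given as a function. -/
def entFun {α : Type} [Fintype α] (q : α → ℝ) : ℝ :=
  -∑ a, q a * Real.logb 2 (q a)

/-- Distribution (pushforward) of the random variable `A` under the pmf `p`. -/
def distOf {Ω α : Type} [Fintype Ω] [Fintype α] (p : Ω → ℝ) (A : Ω → α) : α → ℝ :=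
  fun a => ∑ ω, if A ω = a then p ω else 0

/-- Shannon entropy `H(A)` (base 2). -/
def Hent {Ω α : Type} [Fintype Ω] [Fintype α] (p : Ω → ℝ) (A : Ω → α) : ℝ :=
  entFun (distOf p A)

/-- Conditional entropy `H(A|B)`. -/
def CHent {Ω α β : Type} [Fintype Ω] [Fintype α] [Fintype β]
    (p : Ω → ℝ) (A : Ω → α) (B : Ω → β) : ℝ :=
  Hent p (fun ω => (A ω, B ω)) - Hent p B

/-- Mutual information `I(A;B)`. -/
def MI {Ω α β : Type} [Fintype Ω] [Fintype α] [Fintype β]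
    (p : Ω → ℝ) (A : Ω → α) (B : Ω → β) : ℝ :=
  Hent p A + Hent p B - Hent p (fun ω => (A ω, B ω))

/-- Conditional mutual information `I(A;B|C)`. -/
def CMI {Ω α β γ : Type} [Fintype Ω] [Fintype α] [Fintype β] [Fintype γ]
    (p : Ω → ℝ) (A : Ω → α) (B : Ω → β) (C : Ω → γ) : ℝ :=
  Hent p (fun ω => (A ω, C ω)) + Hent p (fun ω => (B ω, C ω))
    - Hent p (fun ω => (A ω, B ω, C ω)) - Hent p C

/-- `p` is a probability mass function on the finite type `α`. -/
def IsPMF {α : Type} [Fintype α] (p : α → ℝ) : Prop :=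
  (∀ a, 0 ≤ p a) ∧ ∑ a, p a = 1

/-!
Entropy is the expected surprisal: `H(X) log 2 = -∑ ω, p ω log P(X = X ω)`. Written this way,
`I(A;B|C) log 2` is the expectation of `-log x` with `x = P(A,C) P(B,C) / (P(A,B,C) P(C))`, and
`-log x ≥ 1 - x` together with `E[x] ≤ 1` gives `I(A;B|C) ≥ 0`. The same formula shows that the
entropy of `X` depends only on the partition of `Ω` cut out by `X`.

The theorem is then a Shannon inequality: by the chain rule for `I(V;Y₁,Y₂|W)`,
`I(V;Y₂|W) - I(V;Y₁|W) = I(V;Y₂|Y₁,W) - I(V;Y₁|Y₂,W) ≤ I(V;Y₂|Y₁,W) ≤ H(Y₂|Y₁,W) ≤ H(Y₂|Y₁)`,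
using in turn `I(V;Y₁|Y₂,W) ≥ 0`, `H(Y₂|V,Y₁,W) ≥ 0` and `I(Y₂;W|Y₁) ≥ 0`.
-/

open Real Finset

def probAt {Ω α : Type} [Fintype Ω] [Fintype α] (p : Ω → ℝ) (X : Ω → α) (ω : Ω) : ℝ :=
  distOf p X (X ω)

section

variable {Ω α β γ : Type} [Fintype Ω] [Fintype α] [Fintype β] [Fintype γ] (p : Ω → ℝ)

theorem sum_distOf_mul (X : Ω → α) (f : α → ℝ) :
    ∑ x, distOf p X x * f x = ∑ ω, p ω * f (X ω) := by
  simp only [distOf, sum_mul, ite_mul, zero_mul]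
  rw [sum_comm]
  simp

theorem sum_distOf (X : Ω → α) : ∑ x, distOf p X x = ∑ ω, p ω := by
  simpa using sum_distOf_mul p X 1

theorem sum_distOf_pair_fst (A : Ω → α) (C : Ω → γ) (c : γ) :
    ∑ a, distOf p (fun ω => (A ω, C ω)) (a, c) = distOf p C c := by
  simp only [distOf, Prod.mk.injEq, ite_and]
  rw [sum_comm]
  simp

theorem distOf_nonneg {p : Ω → ℝ} (hp : ∀ ω, 0 ≤ p ω) (X : Ω → α) (x : α) :
    0 ≤ distOf p X x :=
  sum_nonneg fun ω _ => by split_ifs <;> simp [hp]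

theorem le_probAt {p : Ω → ℝ} (hp : ∀ ω, 0 ≤ p ω) (X : Ω → α) (ω : Ω) :
    p ω ≤ probAt p X ω := by
  simpa [probAt, distOf] using single_le_sum (f := fun ω' => if X ω' = X ω then p ω' else 0)
    (fun ω' _ => by split_ifs <;> simp [hp]) (mem_univ ω)

theorem Hent_mul_log_two (X : Ω → α) :
    Hent p X * log 2 = -∑ ω, p ω * log (probAt p X ω) := by
  have h2 : log 2 ≠ 0 := (log_pos one_lt_two).ne'
  rw [Hent, entFun, neg_mul, sum_mul, neg_inj]
  calc _ = ∑ x, distOf p X x * log (distOf p X x) :=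
        sum_congr rfl fun x _ => by rw [logb, mul_assoc, div_mul_cancel₀ _ h2]
    _ = _ := sum_distOf_mul p X _

theorem Hent_eq_of_iff (X : Ω → α) (Y : Ω → β) (h : ∀ ω ω', X ω = X ω' ↔ Y ω = Y ω') :
    Hent p X = Hent p Y := by
  have hprob : probAt p X = probAt p Y := funext fun ω => by simp only [probAt, distOf, h]
  refine mul_right_cancel₀ (log_pos one_lt_two).ne' ?_
  rw [Hent_mul_log_two, Hent_mul_log_two, hprob]

theorem CMI_mul_log_two (A : Ω → α) (B : Ω → β) (C : Ω → γ) :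
    CMI p A B C * log 2 = ∑ ω, p ω * (log (probAt p (fun ω => (A ω, B ω, C ω)) ω)
      + log (probAt p C ω) - log (probAt p (fun ω => (A ω, C ω)) ω)
      - log (probAt p (fun ω => (B ω, C ω)) ω)) := by
  simp only [CMI, sub_mul, add_mul, Hent_mul_log_two, mul_add, mul_sub, sum_add_distrib,
    sum_sub_distrib]
  ring

theorem sum_mul_condIndepRatio_le_one {p : Ω → ℝ} (hp : IsPMF p)
    (A : Ω → α) (B : Ω → β) (C : Ω → γ) :
    ∑ ω, p ω * (probAt p (fun ω => (A ω, C ω)) ω * probAt p (fun ω => (B ω, C ω)) ω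
      / (probAt p (fun ω => (A ω, B ω, C ω)) ω * probAt p C ω)) ≤ 1 := by
  set r := distOf p (fun ω => (A ω, B ω, C ω))
  set rAC := distOf p (fun ω => (A ω, C ω))
  set rBC := distOf p (fun ω => (B ω, C ω))
  set rC := distOf p C
  have hr : ∀ x, 0 ≤ r x := distOf_nonneg hp.1 _
  calc _ = ∑ x : α × β × γ, r x * (rAC (x.1, x.2.2) * rBC (x.2.1, x.2.2) / (r x * rC x.2.2)) :=
        (sum_distOf_mul p (fun ω => (A ω, B ω, C ω)) _).symm
    _ ≤ ∑ x : α × β × γ, rAC (x.1, x.2.2) * rBC (x.2.1, x.2.2) / rC x.2.2 := by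
        refine sum_le_sum fun x _ => ?_
        rcases (hr x).eq_or_lt with h0 | hpos
        · rw [← h0, zero_mul]
          exact div_nonneg (mul_nonneg (distOf_nonneg hp.1 _ _) (distOf_nonneg hp.1 _ _))
            (distOf_nonneg hp.1 _ _)
        · rw [← mul_div_assoc, mul_div_mul_left _ _ hpos.ne']
    _ = ∑ c, (∑ a, rAC (a, c)) * (∑ b, rBC (b, c)) / rC c := by
        simp only [Fintype.sum_prod_type, sum_mul_sum, sum_div]
        exact (sum_congr rfl fun a _ => sum_comm).trans sum_comm
    _ = ∑ c, rC c := by simp only [rAC, rBC, rC, sum_distOf_pair_fst, mul_self_div_self]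
    _ = 1 := by rw [sum_distOf, hp.2]

theorem CMI_nonneg {p : Ω → ℝ} (hp : IsPMF p) (A : Ω → α) (B : Ω → β) (C : Ω → γ) :
    0 ≤ CMI p A B C := by
  refine nonneg_of_mul_nonneg_left ?_ (log_pos one_lt_two)
  rw [CMI_mul_log_two]
  set pABC := probAt p (fun ω => (A ω, B ω, C ω))
  set pAC := probAt p (fun ω => (A ω, C ω))
  set pBC := probAt p (fun ω => (B ω, C ω))
  set pC := probAt p C
  have hterm : ∀ ω, p ω * (1 - pAC ω * pBC ω / (pABC ω * pC ω))
      ≤ p ω * (log (pABC ω) + log (pC ω) - log (pAC ω) - log (pBC ω)) := by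
    intro ω
    rcases (hp.1 ω).eq_or_lt with h0 | hpos
    · simp [← h0]
    have hABC := hpos.trans_le (le_probAt hp.1 (fun ω => (A ω, B ω, C ω)) ω)
    have hAC := hpos.trans_le (le_probAt hp.1 (fun ω => (A ω, C ω)) ω)
    have hBC := hpos.trans_le (le_probAt hp.1 (fun ω => (B ω, C ω)) ω)
    have hC := hpos.trans_le (le_probAt hp.1 C ω)
    have hlog := log_le_sub_one_of_pos (by positivity : 0 < pAC ω * pBC ω / (pABC ω * pC ω))
    rw [log_div (by positivity) (by positivity), log_mul hAC.ne' hBC.ne',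
      log_mul hABC.ne' hC.ne'] at hlog
    exact mul_le_mul_of_nonneg_left (by linarith) hpos.le
  calc 0 ≤ ∑ ω, p ω - ∑ ω, p ω * (pAC ω * pBC ω / (pABC ω * pC ω)) := by
        rw [hp.2]
        linarith [sum_mul_condIndepRatio_le_one hp A B C]
    _ = ∑ ω, p ω * (1 - pAC ω * pBC ω / (pABC ω * pC ω)) := by
        simp only [mul_sub, mul_one, sum_sub_distrib]
    _ ≤ _ := sum_le_sum fun ω _ => hterm ω

theorem CHent_nonneg {p : Ω → ℝ} (hp : IsPMF p) (X : Ω → α) (Z : Ω → β) : 0 ≤ CHent p X Z := by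
  have h := CMI_nonneg hp X X Z
  rw [CMI, Hent_eq_of_iff p (fun ω => (X ω, X ω, Z ω)) (fun ω => (X ω, Z ω))
    fun _ _ => by simp only [Prod.mk.injEq]; tauto] at h
  rw [CHent]
  linarith

end

/-- **Inequality from Appendix C.** `I(V;Y2|W) − I(V;Y1|W) ≤ H(Y2|Y1)`. -/
theorem det_region_ineq {Ω A B D1 D2 : Type} [Fintype Ω] [Fintype A] [Fintype B]
    [Fintype D1] [Fintype D2]
    (p : Ω → ℝ) (hp : IsPMF p)
    (W : Ω → A) (V : Ω → B) (Y1 : Ω → D1) (Y2 : Ω → D2) :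
    CMI p V Y2 W - CMI p V Y1 W ≤ CHent p Y2 Y1 := by
  have hV_Y1 := CMI_nonneg hp V Y1 fun ω => (Y2 ω, W ω)
  have hY2_W := CMI_nonneg hp Y2 W Y1
  have hY2 := CHent_nonneg hp Y2 fun ω => (V ω, Y1 ω, W ω)
  have e1 : Hent p (fun ω => (Y2 ω, W ω, Y1 ω)) = Hent p (fun ω => (Y1 ω, Y2 ω, W ω)) :=
    Hent_eq_of_iff p _ _ fun _ _ => by simp only [Prod.mk.injEq]; tauto
  have e2 : Hent p (fun ω => (Y2 ω, V ω, Y1 ω, W ω))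
      = Hent p (fun ω => (V ω, Y1 ω, Y2 ω, W ω)) :=
    Hent_eq_of_iff p _ _ fun _ _ => by simp only [Prod.mk.injEq]; tauto
  have e3 : Hent p (fun ω => (W ω, Y1 ω)) = Hent p (fun ω => (Y1 ω, W ω)) :=
    Hent_eq_of_iff p _ _ fun _ _ => by simp only [Prod.mk.injEq]; tauto
  simp only [CMI, CHent] at *
  linarith
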